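/- arXiv:2203.16815 — 4 statements merged into one kernel-verified Lean document; each statement's English description precedes it below -/
import Mathlib

section
/- Let p ∈ (1, ∞), γ ∈ ℝ with γ < p and γ ≠ 0, and let a, b > 0. Then max{a,b}^{γ-p} |a-b|^p ≤ (p/|γ|)^p |a^{γ/p} - b^{γ/p}|^p. -/
open Real

/-- Bernoulli-type estimate for negative exponents: for `β < 0`, `0 < x ≤ 1`,
`1 + β * (x - 1) ≤ x ^ β`. -/
private lemma key0 {β x : ℝ} (hβ : β < 0) (hx0 : 0 < x) (hx1 : x ≤ 1) :
    1 + β * (x - 1) ≤ x ^ β := by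
  have hs : (-1 : ℝ) ≤ x - 1 := by linarith
  rcases le_or_gt (-β) 1 with hβ' | hβ'
  · -- -1 ≤ β < 0
    have h1 : x ^ (-β) ≤ 1 + (-β) * (x - 1) := by
      have := rpow_one_add_le_one_add_mul_self hs (by linarith : (0:ℝ) ≤ -β) hβ'
      simpa using this
    have hpos : 0 < x ^ (-β) := rpow_pos_of_pos hx0 _
    have h2 : 0 < 1 + (-β) * (x - 1) := lt_of_lt_of_le hpos h1
    have hx2 : x ^ β = (x ^ (-β))⁻¹ := by
      rw [← rpow_neg hx0.le, neg_neg]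
    rw [hx2]
    have h3 : (1 + (-β) * (x - 1))⁻¹ ≤ (x ^ (-β))⁻¹ :=
      inv_anti₀ hpos h1
    refine le_trans ?_ h3
    rw [inv_eq_one_div, le_div_iff₀ h2]
    nlinarith [sq_nonneg (β * (x - 1))]
  · -- β < -1
    have hxi : (1:ℝ) ≤ x⁻¹ := by
      rw [le_inv_comm₀ one_pos hx0]; simpa
    have ht : (0:ℝ) ≤ x⁻¹ - 1 := by linarith
    have h1 : 1 + (-β) * (x⁻¹ - 1) ≤ (x⁻¹) ^ (-β) := by
      have := one_add_mul_self_le_rpow_one_add (by linarith : (-1:ℝ) ≤ x⁻¹ - 1) (le_of_lt hβ')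
      simpa using this
    have hx2 : (x⁻¹) ^ (-β) = x ^ β := by
      rw [inv_rpow hx0.le, ← rpow_neg hx0.le, neg_neg]
    rw [← hx2]
    refine le_trans ?_ h1
    have hsum : 0 ≤ x + x⁻¹ - 2 := by
      have : x * x⁻¹ = 1 := mul_inv_cancel₀ hx0.ne'
      nlinarith [sq_nonneg (x - 1)]
    nlinarith

/-- Key scalar inequality: for `β ≠ 0`, `β < 1`, `0 < x ≤ 1`,
`|β| * (1 - x) ≤ |1 - x ^ β|`. -/
private lemma key1 {β x : ℝ} (hβ0 : β ≠ 0) (hβ1 : β < 1) (hx0 : 0 < x) (hx1 : x ≤ 1) :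
    |β| * (1 - x) ≤ |1 - x ^ β| := by
  rcases lt_or_gt_of_ne hβ0 with hβ | hβ
  · -- β < 0 : x ^ β ≥ 1
    have hxb : 1 ≤ x ^ β := one_le_rpow_of_pos_of_le_one_of_nonpos hx0 hx1 hβ.le
    rw [abs_of_neg hβ, abs_sub_comm, abs_of_nonneg (by linarith)]
    have := key0 hβ hx0 hx1
    nlinarith
  · -- 0 < β < 1 : x ^ β ≤ 1
    have hxb : x ^ β ≤ 1 := rpow_le_one hx0.le hx1 hβ.le
    rw [abs_of_pos hβ, abs_of_nonneg (by linarith)]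
    have h1 : x ^ β ≤ 1 + β * (x - 1) := by
      have := rpow_one_add_le_one_add_mul_self (by linarith : (-1:ℝ) ≤ x - 1) hβ.le hβ1.le
      simpa using this
    nlinarith

/-- Lemma A.6 (alg-ineq-suff): for `1 < p`, `γ < p`, `γ ≠ 0` and `a, b > 0`,
`max{a,b}^(γ-p) |a-b|^p ≤ (p/|γ|)^p |a^(γ/p) - b^(γ/p)|^p`. -/
theorem stmt_0 (p γ a b : ℝ) (hp : 1 < p) (hγp : γ < p) (hγ : γ ≠ 0)
    (ha : 0 < a) (hb : 0 < b) :
    (max a b) ^ (γ - p) * |a - b| ^ p ≤ (p / |γ|) ^ p * |a ^ (γ / p) - b ^ (γ / p)| ^ p := by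
  wlog hab : b ≤ a with H
  · have := H p γ b a hp hγp hγ hb ha (le_of_not_ge hab)
    rwa [max_comm, abs_sub_comm b a, abs_sub_comm (b ^ (γ / p))] at this
  have hp0 : (0:ℝ) < p := lt_trans one_pos hp
  set β : ℝ := γ / p with hβdef
  have hβ0 : β ≠ 0 := div_ne_zero hγ hp0.ne'
  have hβ1 : β < 1 := (div_lt_one hp0).mpr hγp
  have hx0 : 0 < b / a := div_pos hb ha
  have hx1 : b / a ≤ 1 := (div_le_one ha).mpr hab
  have key := key1 hβ0 hβ1 hx0 hx1
  have hβabs : |β| = |γ| / p := by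
    rw [hβdef, abs_div, abs_of_pos hp0]
  have hγabs : (0:ℝ) < |γ| := abs_pos.mpr hγ
  -- key scaled inequality
  have hkey : a ^ (β - 1) * (a - b) ≤ (p / |γ|) * |a ^ β - b ^ β| := by
    have haβ : 0 < a ^ β := rpow_pos_of_pos ha _
    have e1 : a ^ (β - 1) * (a - b) = a ^ β * (1 - b / a) := by
      rw [rpow_sub ha, rpow_one]
      field_simp
    have e2 : a ^ β * |1 - (b / a) ^ β| = |a ^ β - b ^ β| := by
      rw [← abs_of_pos haβ, ← abs_mul, mul_sub, mul_one, div_rpow hb.le ha.le,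
        mul_div_cancel₀ _ haβ.ne', abs_of_pos haβ]
    have h3 : a ^ β * (|β| * (1 - b / a)) ≤ a ^ β * |1 - (b / a) ^ β| :=
      mul_le_mul_of_nonneg_left key haβ.le
    rw [e2] at h3
    rw [e1, div_mul_eq_mul_div, le_div_iff₀ hγabs]
    calc a ^ β * (1 - b / a) * |γ|
        = (a ^ β * (|β| * (1 - b / a))) * p := by rw [hβabs]; field_simp
      _ ≤ |a ^ β - b ^ β| * p := by
          exact mul_le_mul_of_nonneg_right h3 hp0.le
      _ = p * |a ^ β - b ^ β| := mul_comm _ _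
  -- raise to the power p
  have hL : 0 ≤ a ^ (β - 1) * (a - b) :=
    mul_nonneg (rpow_nonneg ha.le _) (by linarith)
  have hmain := rpow_le_rpow hL hkey hp0.le
  rw [mul_rpow (rpow_nonneg ha.le _) (by linarith : (0:ℝ) ≤ a - b),
    mul_rpow (div_nonneg hp0.le (abs_nonneg _)) (abs_nonneg _)] at hmain
  rw [max_eq_left hab, abs_of_nonneg (by linarith : (0:ℝ) ≤ a - b)]
  have e3 : (a ^ (β - 1)) ^ p = a ^ (γ - p) := by
    rw [← rpow_mul ha.le]
    congr 1
    have : β * p = γ := by rw [hβdef]; field_simp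
    linarith
  rw [← e3]
  exact hmain
end

section
/- Let p > 1, β ≠ 0, γ = β + p - 1 ≠ 0, d > 0, l ≥ 0, and define f(t) = (1/β)((t+d)^β - (l+d)^β) and F(t) = (p/γ)(t+d)^{γ/p} on the interval I, where I = [l, ∞) if β > 0 and I = [0, l] if β < 0. Then for all a, b ∈ I: |a-b|^{p-2}(a-b)(f(a) - f(b)) ≥ |F(a) - F(b)|^p. -/
/-!
With `r = (β - 1) / p`, both sides are integrals of one function:
`F(y) - F(x) = ∫_x^y (t + d)^r` and `f(y) - f(x) = ∫_x^y ((t + d)^r)^p`. Jensen's inequality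
for the convex map `s ↦ s^p`, applied to the average of `(t + d)^r` over `[x, y]`, gives
`(F(y) - F(x))^p ≤ (y - x)^(p-1) (f(y) - f(x))`,
and the signed power `|x - y|^(p-2) (x - y)` makes the inequality symmetric in `x` and `y`.
-/

open MeasureTheory Set

theorem rpow_intervalIntegral_le {g : ℝ → ℝ} {a b p : ℝ} (hp : 1 ≤ p) (hab : a ≤ b)
    (hg : ContinuousOn g (Icc a b)) (hg0 : ∀ t ∈ Icc a b, 0 ≤ g t) :
    (∫ t in a..b, g t) ^ p ≤ (b - a) ^ (p - 1) * ∫ t in a..b, g t ^ p := by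
  rcases hab.eq_or_lt with rfl | hlt
  · simp [Real.zero_rpow (by linarith : p ≠ 0)]
  have hL : 0 < b - a := sub_pos.2 hlt
  have hgp : ContinuousOn (fun t => g t ^ p) (Icc a b) :=
    hg.rpow_const fun _ _ => Or.inr (by linarith)
  have hg0' : ∀ᵐ t ∂volume.restrict (Ioc a b), g t ∈ Ici 0 :=
    (ae_restrict_iff' measurableSet_Ioc).2 (ae_of_all _ fun t ht => hg0 t (Ioc_subset_Icc_self ht))
  have jensen := (convexOn_rpow hp).map_set_average_le
    (continuousOn_id.rpow_const fun _ _ => Or.inr (by linarith)) isClosed_Ici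
    (by simp [hlt]) (by simp) hg0' (hg.integrableOn_Icc.mono_set Ioc_subset_Icc_self)
    (hgp.integrableOn_Icc.mono_set Ioc_subset_Icc_self)
  have hI : 0 ≤ ∫ t in Ioc a b, g t := setIntegral_nonneg measurableSet_Ioc
    fun t ht => hg0 t (Ioc_subset_Icc_self ht)
  simp only [setAverage_eq, Real.volume_real_Ioc_of_le hab, smul_eq_mul] at jensen
  rw [Real.mul_rpow (inv_nonneg.2 hL.le) hI, Real.inv_rpow hL.le,
    inv_mul_le_iff₀ (by positivity)] at jensen
  rw [intervalIntegral.integral_of_le hab, intervalIntegral.integral_of_le hab,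
    Real.rpow_sub_one hL.ne']
  simpa only [div_eq_mul_inv, mul_assoc] using jensen

theorem integral_add_const_rpow {a b d r : ℝ} (hr : r ≠ -1) (ha : 0 < a + d) (hb : 0 < b + d) :
    ∫ t in a..b, (t + d) ^ r = ((b + d) ^ (r + 1) - (a + d) ^ (r + 1)) / (r + 1) := by
  rw [intervalIntegral.integral_comp_add_right (· ^ r) d]
  refine integral_rpow (Or.inr ⟨hr, fun h => ?_⟩)
  rcases mem_uIcc.mp h with h | h <;> linarith [h.1, h.2]

theorem abs_sub_rpow_le_of_le {p β γ d x y : ℝ} (hp : 1 < p) (hβ : β ≠ 0)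
    (hγdef : γ = β + p - 1) (hγ : γ ≠ 0) (hx : 0 < x + d) (hxy : x ≤ y) :
    |p / γ * (y + d) ^ (γ / p) - p / γ * (x + d) ^ (γ / p)| ^ p
      ≤ (y - x) ^ (p - 1) * (1 / β * ((y + d) ^ β - (x + d) ^ β)) := by
  have hp0 : p ≠ 0 := by positivity
  have hpos : ∀ t ∈ Icc x y, 0 < t + d := fun t ht => by linarith [ht.1]
  have hy : 0 < y + d := hpos y (right_mem_Icc.2 hxy)
  set r := (β - 1) / p
  have hr : r + 1 = γ / p := by simp only [r]; field_simp; linarith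
  have hr' : r ≠ -1 := fun h => by
    rw [h, neg_add_cancel, eq_comm, div_eq_zero_iff] at hr
    exact hr.elim hγ hp0
  have hF :
      p / γ * (y + d) ^ (γ / p) - p / γ * (x + d) ^ (γ / p) = ∫ t in x..y, (t + d) ^ r := by
    rw [integral_add_const_rpow hr' hx hy, hr]
    field_simp
  have hf : 1 / β * ((y + d) ^ β - (x + d) ^ β) = ∫ t in x..y, ((t + d) ^ r) ^ p := by
    rw [intervalIntegral.integral_congr (g := fun t => (t + d) ^ (β - 1)) fun t ht => by
      rw [uIcc_of_le hxy] at ht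
      simp only [← Real.rpow_mul (hpos t ht).le, r, div_mul_cancel₀ _ hp0]]
    rw [integral_add_const_rpow (by intro h; apply hβ; linarith) hx hy, sub_add_cancel]
    ring
  have hI : 0 ≤ ∫ t in x..y, (t + d) ^ r :=
    intervalIntegral.integral_nonneg hxy fun t ht => Real.rpow_nonneg (hpos t ht).le _
  rw [hF, hf, abs_of_nonneg hI]
  exact rpow_intervalIntegral_le hp.le hxy
    (ContinuousOn.rpow_const (by fun_prop) fun t ht => Or.inl (hpos t ht).ne')
    fun t ht => Real.rpow_nonneg (hpos t ht).le _

theorem abs_sub_rpow_le_signed_rpow_mul {p β γ d x y : ℝ} (hp : 1 < p) (hβ : β ≠ 0)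
    (hγdef : γ = β + p - 1) (hγ : γ ≠ 0) (hx : 0 < x + d) (hy : 0 < y + d) :
    |p / γ * (x + d) ^ (γ / p) - p / γ * (y + d) ^ (γ / p)| ^ p
      ≤ |x - y| ^ (p - 2) * (x - y) * (1 / β * ((x + d) ^ β - (y + d) ^ β)) := by
  wlog hyx : y ≤ x generalizing x y
  · rw [abs_sub_comm x y, abs_sub_comm]
    convert this hy hx (le_of_not_ge hyx) using 1
    ring
  have hsigned : |x - y| ^ (p - 2) * (x - y) = (x - y) ^ (p - 1) := by
    rcases hyx.eq_or_lt with rfl | hlt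
    · simp [Real.zero_rpow (by linarith : p - 1 ≠ 0)]
    rw [abs_of_nonneg (sub_nonneg.2 hyx), ← Real.rpow_add_one (sub_pos.2 hlt).ne']
    ring_nf
  rw [hsigned]
  exact abs_sub_rpow_le_of_le hp hβ hγdef hγ hy hyx

/-- Lemma A.2, first inequality: with `f(t) = (1/β)((t+d)^β - (l+d)^β)` and
`F(t) = (p/γ)(t+d)^(γ/p)` where `γ = β + p - 1`, for `a, b` in the interval `I`
(`I = [l,∞)` if `β > 0`, `I = [0,l]` if `β < 0`),
`|a-b|^(p-2)(a-b)(f(a)-f(b)) ≥ |F(a)-F(b)|^p`. -/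
theorem stmt_3 (p β γ d l a b : ℝ) (hp : 1 < p) (hβ : β ≠ 0) (hγdef : γ = β + p - 1)
    (hγ : γ ≠ 0) (hd : 0 < d) (hl : 0 ≤ l)
    (ha : if 0 < β then l ≤ a else 0 ≤ a ∧ a ≤ l)
    (hb : if 0 < β then l ≤ b else 0 ≤ b ∧ b ≤ l) :
    |a - b| ^ (p - 2) * (a - b) *
        ((1 / β) * ((a + d) ^ β - (l + d) ^ β) - (1 / β) * ((b + d) ^ β - (l + d) ^ β))
      ≥ |(p / γ) * (a + d) ^ (γ / p) - (p / γ) * (b + d) ^ (γ / p)| ^ p := by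
  have hpos : ∀ t, (if 0 < β then l ≤ t else 0 ≤ t ∧ t ≤ l) → 0 < t + d := by
    intro t ht
    split_ifs at ht
    exacts [by linarith, by linarith [ht.1]]
  rw [← mul_sub, sub_sub_sub_cancel_right]
  exact abs_sub_rpow_le_signed_rpow_mul hp hβ hγdef hγ (hpos a ha) (hpos b hb)
end

section
/- Let p > 1 and t = 1/(p-1). For every β > 1 there exists a constant C > 0 (depending on t and β) such that for every sequence {a_j}_{j≥1} of nonnegative real numbers, (Σ_{j=1}^∞ a_j)^t ≤ C Σ_{j=1}^∞ β^j a_j^t. -/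
/-! If `S = Σ w_j a_j^t`, then every single term gives `a_j ≤ w_j^{-1/t} S^{1/t}`; summing,
`(Σ a_j)^t ≤ (Σ w_j^{-1/t})^t S`. For `w_j = β^j` the weights `w_j^{-1/t} = (β^{-1/t})^j` form a
convergent geometric series, which gives the constant `C`. -/

open ENNReal

namespace ENNReal

theorem le_inv_rpow_mul_rpow_of_mul_rpow_le {t : ℝ} (ht : 0 < t) {w x S : ℝ≥0∞}
    (hw₀ : w ≠ 0) (hw : w ≠ ⊤) (h : w * x ^ t ≤ S) : x ≤ w⁻¹ ^ t⁻¹ * S ^ t⁻¹ :=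
  calc x = (w⁻¹ * (w * x ^ t)) ^ t⁻¹ := by
        rw [← mul_assoc, ENNReal.inv_mul_cancel hw₀ hw, one_mul, ← rpow_mul,
          mul_inv_cancel₀ ht.ne', rpow_one]
    _ ≤ (w⁻¹ * S) ^ t⁻¹ := by gcongr
    _ = w⁻¹ ^ t⁻¹ * S ^ t⁻¹ := mul_rpow_of_nonneg _ _ (inv_nonneg.2 ht.le)

theorem tsum_rpow_le_tsum_inv_rpow_rpow_mul_tsum {ι : Type*} {t : ℝ} (ht : 0 < t)
    {w : ι → ℝ≥0∞} (hw₀ : ∀ j, w j ≠ 0) (hw : ∀ j, w j ≠ ⊤) (a : ι → ℝ≥0∞) :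
    (∑' j, a j) ^ t ≤ (∑' j, (w j)⁻¹ ^ t⁻¹) ^ t * ∑' j, w j * a j ^ t := by
  set S := ∑' j, w j * a j ^ t
  calc (∑' j, a j) ^ t ≤ (∑' j, (w j)⁻¹ ^ t⁻¹ * S ^ t⁻¹) ^ t := by
        gcongr with j
        exact le_inv_rpow_mul_rpow_of_mul_rpow_le ht (hw₀ j) (hw j) (ENNReal.le_tsum j)
    _ = (∑' j, (w j)⁻¹ ^ t⁻¹) ^ t * S := by
        rw [ENNReal.tsum_mul_right, mul_rpow_of_nonneg _ _ ht.le, ← rpow_mul,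
          inv_mul_cancel₀ ht.ne', rpow_one]

theorem tsum_pow_succ_ne_top {q : ℝ≥0∞} (hq : q < 1) : ∑' j : ℕ, q ^ (j + 1) ≠ ⊤ := by
  simp_rw [pow_succ, ENNReal.tsum_mul_right, ENNReal.tsum_geometric]
  exact mul_ne_top (inv_ne_top.2 (tsub_pos_of_lt hq).ne') (hq.trans one_lt_top).ne

end ENNReal

/-- Dyda's inequality [Dyd06, Lemma 3(b)] with `t = 1/(p-1)`: for every `β > 1` there
is `C > 0` such that for every sequence `{a_j}_{j ≥ 1}` of nonnegative (extended) reals,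
`(Σ_{j=1}^∞ a_j)^t ≤ C Σ_{j=1}^∞ β^j a_j^t`. -/
theorem stmt_5 (p t β : ℝ) (hp : 1 < p) (ht : t = 1 / (p - 1)) (hβ : 1 < β) :
    ∃ C : ℝ, 0 < C ∧ ∀ a : ℕ → ℝ≥0∞,
      (∑' j : ℕ, a (j + 1)) ^ t ≤
        ENNReal.ofReal C * ∑' j : ℕ, ENNReal.ofReal β ^ (j + 1) * a (j + 1) ^ t := by
  have ht₀ : 0 < t := ht ▸ one_div_pos.2 (sub_pos.2 hp)
  set b := ENNReal.ofReal β
  have hb : 1 < b := by simpa [b] using hβ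
  set q := b⁻¹ ^ t⁻¹
  have hq : q < 1 := rpow_lt_one (ENNReal.inv_lt_one.2 hb) (inv_pos.2 ht₀)
  have hb₀ : b ≠ 0 := (zero_lt_one.trans hb).ne'
  have hq₀ : q ≠ 0 := (rpow_pos (ENNReal.inv_pos.2 ofReal_ne_top) (inv_ne_top.2 hb₀)).ne'
  have hweight : ∀ j : ℕ, (b ^ (j + 1))⁻¹ ^ t⁻¹ = q ^ (j + 1) := fun j => by
    rw [ENNReal.inv_pow, ← rpow_natCast_mul, mul_comm, rpow_mul_natCast]
  set K := (∑' j : ℕ, q ^ (j + 1)) ^ t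
  have hK₀ : K ≠ 0 := (rpow_pos ((pow_ne_zero 1 hq₀).bot_lt.trans_le (ENNReal.le_tsum 0))
    (tsum_pow_succ_ne_top hq)).ne'
  have hK : K ≠ ⊤ := rpow_ne_top_of_nonneg ht₀.le (tsum_pow_succ_ne_top hq)
  refine ⟨K.toReal, toReal_pos hK₀ hK, fun a => ?_⟩
  rw [ofReal_toReal hK]
  have hbound := tsum_rpow_le_tsum_inv_rpow_rpow_mul_tsum ht₀ (w := fun j => b ^ (j + 1))
    (fun j => pow_ne_zero _ hb₀) (fun j => pow_ne_top ofReal_ne_top) fun j => a (j + 1)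
  rwa [tsum_congr hweight] at hbound
end

section
/- Let p > 1, τ > 1, q > 0, and define g(t) = (1/(τ-1))(1 - (1+t)^{1-τ}) and G(t) = (q/γ)((1+t)^{γ/q} - 1) for t ≥ 0, where γ = τ(p-1) and q = pγ/(p - γ/(p-1)) (so that |G'(t)|^p = g'(t)). Then for all a, b ≥ 0: |a - b|^{p-2}(a-b)(g(a) - g(b)) ≥ |G(a) - G(b)|^p. -/
/-!
With `G'(t) = (1 + t)^(γ/q - 1)` one has `G(a) - G(b) = ∫_b^a G'`, and the choice of `q` is exactly
what makes `(γ/q - 1) p = -τ`, i.e. `G'^p = g'`, so `g(a) - g(b) = ∫_b^a G'^p`. Jensen's inequality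
for the convex function `x ↦ x^p` on the average over `[b, a]` then gives
`(G(a) - G(b))^p ≤ (a - b)^(p-1) (g(a) - g(b))`.
-/

open MeasureTheory Set

theorem rpow_intervalIntegral_le_mul_intervalIntegral_rpow {f : ℝ → ℝ} {p a b : ℝ}
    (hp : 1 ≤ p) (hba : b < a) (hf : ContinuousOn f (Icc b a))
    (hf0 : ∀ x ∈ Icc b a, 0 ≤ f x) :
    (∫ x in b..a, f x) ^ p ≤ (a - b) ^ (p - 1) * ∫ x in b..a, f x ^ p := by
  have hfp : ContinuousOn (fun x => f x ^ p) (Icc b a) :=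
    hf.rpow_const fun _ _ => Or.inr (by linarith)
  have jensen := (convexOn_rpow hp).map_set_average_le (μ := volume) (t := Ioc b a)
    (continuousOn_id.rpow_const fun _ _ => Or.inr (by linarith)) isClosed_Ici
    (by simp [hba]) (by simp)
    ((ae_restrict_mem measurableSet_Ioc).mono fun x hx => hf0 x (Ioc_subset_Icc_self hx))
    (hf.integrableOn_Icc.mono_set Ioc_subset_Icc_self)
    (hfp.integrableOn_Icc.mono_set Ioc_subset_Icc_self)
  have hba' : 0 < a - b := sub_pos.2 hba
  rw [setAverage_eq, setAverage_eq, Real.volume_real_Ioc_of_le hba.le,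
    ← intervalIntegral.integral_of_le hba.le, ← intervalIntegral.integral_of_le hba.le,
    smul_eq_mul, smul_eq_mul,
    Real.mul_rpow (inv_nonneg.2 hba'.le) (intervalIntegral.integral_nonneg hba.le hf0),
    Real.inv_rpow hba'.le] at jensen
  calc (∫ x in b..a, f x) ^ p = (a - b) ^ p * (((a - b) ^ p)⁻¹ * (∫ x in b..a, f x) ^ p) := by
        field_simp
    _ ≤ (a - b) ^ p * ((a - b)⁻¹ * ∫ x in b..a, f x ^ p) := by gcongr
    _ = (a - b) ^ (p - 1) * ∫ x in b..a, f x ^ p := by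
        rw [Real.rpow_sub_one hba'.ne']; ring

theorem abs_rpow_sub_two_mul_self_of_pos {x : ℝ} (p : ℝ) (hx : 0 < x) :
    |x| ^ (p - 2) * x = x ^ (p - 1) := by
  rw [abs_of_pos hx, ← Real.rpow_add_one hx.ne']
  ring_nf

section

variable {G g G' : ℝ → ℝ} {p a b : ℝ}

theorem abs_sub_rpow_le_of_hasDerivAt_of_lt (hp : 1 ≤ p) (hba : b < a)
    (hG : ∀ x ∈ Icc b a, HasDerivAt G (G' x) x) (hg : ∀ x ∈ Icc b a, HasDerivAt g (G' x ^ p) x)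
    (hG'c : ContinuousOn G' (Icc b a)) (hG'0 : ∀ x ∈ Icc b a, 0 ≤ G' x) :
    |G a - G b| ^ p ≤ (a - b) ^ (p - 1) * (g a - g b) := by
  rw [← uIcc_of_le hba.le] at hG hg hG'c
  have hG'p : ContinuousOn (fun x => G' x ^ p) (uIcc b a) :=
    hG'c.rpow_const fun _ _ => Or.inr (by linarith)
  rw [← intervalIntegral.integral_eq_sub_of_hasDerivAt hG (hG'c.intervalIntegrable),
    ← intervalIntegral.integral_eq_sub_of_hasDerivAt hg (hG'p.intervalIntegrable),
    abs_of_nonneg (intervalIntegral.integral_nonneg hba.le hG'0)]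
  exact rpow_intervalIntegral_le_mul_intervalIntegral_rpow hp hba (uIcc_of_le hba.le ▸ hG'c) hG'0

theorem abs_sub_rpow_le_of_hasDerivAt (hp : 1 < p)
    (hG : ∀ x ∈ uIcc a b, HasDerivAt G (G' x) x) (hg : ∀ x ∈ uIcc a b, HasDerivAt g (G' x ^ p) x)
    (hG'c : ContinuousOn G' (uIcc a b)) (hG'0 : ∀ x ∈ uIcc a b, 0 ≤ G' x) :
    |G a - G b| ^ p ≤ |a - b| ^ (p - 2) * (a - b) * (g a - g b) := by
  rcases lt_trichotomy a b with hab | rfl | hba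
  · rw [uIcc_of_le hab.le] at hG hg hG'c hG'0
    calc |G a - G b| ^ p = |G b - G a| ^ p := by rw [abs_sub_comm]
      _ ≤ (b - a) ^ (p - 1) * (g b - g a) :=
        abs_sub_rpow_le_of_hasDerivAt_of_lt hp.le hab hG hg hG'c hG'0
      _ = |b - a| ^ (p - 2) * (b - a) * (g b - g a) := by
        rw [abs_rpow_sub_two_mul_self_of_pos p (sub_pos.2 hab)]
      _ = |a - b| ^ (p - 2) * (a - b) * (g a - g b) := by
        rw [abs_sub_comm]; ring
  · simp [Real.zero_rpow (by positivity : p ≠ 0)]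
  · rw [uIcc_of_ge hba.le] at hG hg hG'c hG'0
    rw [abs_rpow_sub_two_mul_self_of_pos p (sub_pos.2 hba)]
    exact abs_sub_rpow_le_of_hasDerivAt_of_lt hp.le hba hG hg hG'c hG'0

end

theorem hasDerivAt_one_div_mul_one_add_rpow_sub_one {s x : ℝ} (hs : s ≠ 0) (hx : 0 < 1 + x) :
    HasDerivAt (fun t => 1 / s * ((1 + t) ^ s - 1)) ((1 + x) ^ (s - 1)) x := by
  refine ((((hasDerivAt_id' x).const_add 1).rpow_const (p := s)
    (Or.inl hx.ne')).sub_const 1 |>.const_mul (1 / s)).congr_deriv ?_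
  field_simp

/-- Lemma A.5 (first inequality): with `γ = τ(p-1)`, `q = pγ/(p - γ/(p-1))`,
`g(t) = (1/(τ-1))(1 - (1+t)^(1-τ))` and `G(t) = (q/γ)((1+t)^(γ/q) - 1)`, one has
`|a-b|^(p-2)(a-b)(g(a)-g(b)) ≥ |G(a)-G(b)|^p` for all `a, b ≥ 0`. -/
theorem stmt_7 (p τ γ q a b : ℝ) (hp : 1 < p) (hτ : 1 < τ) (hq0 : 0 < q)
    (hγ : γ = τ * (p - 1)) (hq : q = p * γ / (p - γ / (p - 1)))
    (ha : 0 ≤ a) (hb : 0 ≤ b) :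
    |a - b| ^ (p - 2) * (a - b) *
        ((1 / (τ - 1)) * (1 - (1 + a) ^ (1 - τ)) - (1 / (τ - 1)) * (1 - (1 + b) ^ (1 - τ)))
      ≥ |(q / γ) * ((1 + a) ^ (γ / q) - 1) - (q / γ) * ((1 + b) ^ (γ / q) - 1)| ^ p := by
  have hγτ : γ / (p - 1) = τ := by rw [hγ, mul_div_cancel_right₀ τ (by linarith : p - 1 ≠ 0)]
  rw [hγτ] at hq
  have hpτ : p - τ ≠ 0 := fun h => by rw [h, div_zero] at hq; linarith
  have hγ0 : γ ≠ 0 := by rw [hγ]; nlinarith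
  have hs : (γ / q - 1) * p = -τ := by
    rw [hq]
    field_simp
    ring
  have hx : ∀ x ∈ uIcc a b, 0 < 1 + x := fun x hx => by linarith [le_inf ha hb, hx.1]
  rw [← one_div_div γ q]
  refine abs_sub_rpow_le_of_hasDerivAt (G := fun t => 1 / (γ / q) * ((1 + t) ^ (γ / q) - 1))
    (g := fun t => 1 / (τ - 1) * (1 - (1 + t) ^ (1 - τ)))
    (G' := fun x => (1 + x) ^ (γ / q - 1)) hp
    (fun x hx' => hasDerivAt_one_div_mul_one_add_rpow_sub_one (div_ne_zero hγ0 hq0.ne') (hx x hx'))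
    (fun x hx' => ?_) (ContinuousOn.rpow_const (by fun_prop) fun x hx' => Or.inl (hx x hx').ne')
    (fun x hx' => Real.rpow_nonneg (hx x hx').le _)
  rw [← Real.rpow_mul (hx x hx').le, hs]
  -- `g` is the same primitive as `G`, with exponent `1 - τ` in place of `γ / q`
  convert hasDerivAt_one_div_mul_one_add_rpow_sub_one (sub_ne_zero.2 hτ.ne) (hx x hx') using 1
  · funext t
    field_simp [sub_ne_zero.2 hτ.ne, sub_ne_zero.2 hτ.ne']
    ring
  · ring_nf
end
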